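/- Let n ≥ 2 and 0 < α ≤ 1. There exists a constant C_{n,α} > 0, depending only on n and α, such that the following holds. Let 0 < K_− ≤ K ≤ K_+, h > 0, b > 0 with b² ≥ h/K_−, let w : ℝ^{n−1} → ℝ be measurable with K_−|x'|² ≤ w(x') ≤ K_+|x'|² for all |x'| < b, and set D_{b,h} = { x = (x', x_n) ∈ ℝⁿ : |x'| < b, w(x') < x_n < h }. Let F : ℝⁿ → ℝⁿ satisfy |F(x) − F(0)| ≤ A|x|^α for all x in the closure of D_{b,h}, where A ≥ 0. Then for all τ > 0, every unit vector v̂' ∈ ℝ^{n−1}, and ξ = iτ(v̂', 0) − τe_n, one has |∫_{D_{b,h}} (ξ · (F(x) − F(0))) E_ξ(x) dx| ≤ C_{n,α} A τ (h + K_−^{−1})^{α/2} h^{(n+α+1)/2} K_−^{−(n−1)/2}. -/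

import Mathlib

/-!
The integrand is bounded pointwise: `|ξ · (F(x) − F(0))| ≤ τ |F(x) − F(0)| ≤ τ A |x|^α`, and
`|E_ξ(x)| = e^{−τ x_n} ≤ 1` since `x_n > 0` on `D_{b,h}`. The lower paraboloid `x_n ≥ K_−|x'|²`
squeezes `D_{b,h}` into the cylinder `|x'| < (h/K_−)^{1/2}`, `0 < x_n < h`, on which
`|x|² ≤ h/K_− + h² = h (h + K_−⁻¹)` and whose volume is `|B_1| (h/K_−)^{(n−1)/2} h`.
Multiplying the two bounds gives the estimate with `C_{n,α} = |B_1|`, the volume of the unit ball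
of `ℝ^{n−1}`.
-/

open MeasureTheory Metric Set Module

/-- The region `D_{b,h}`. -/
def graphCap {E : Type*} [Norm E] (w : E → ℝ) (b h : ℝ) : Set (E × ℝ) :=
  {x | ‖x.1‖ < b ∧ w x.1 < x.2 ∧ x.2 < h}

section Geometry

variable {E : Type*} [SeminormedAddCommGroup E]

theorem graphCap_subset_ball_prod_Ioo {w : E → ℝ} {b h Km : ℝ} (hKm : 0 < Km)
    (hw : ∀ x', ‖x'‖ < b → Km * ‖x'‖ ^ 2 ≤ w x') :
    graphCap w b h ⊆ ball 0 (√(h / Km)) ×ˢ Ioo 0 h := by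
  rintro ⟨x', t⟩ ⟨hx', hwt, hth⟩
  have hlow := hw x' hx'
  refine ⟨?_, by nlinarith [sq_nonneg ‖x'‖], hth⟩
  rw [mem_ball_zero_iff, Real.lt_sqrt (norm_nonneg _), lt_div_iff₀ hKm]
  linarith

theorem norm_sq_add_sq_le_of_mem_ball_prod_Ioo {r h : ℝ} {x : E × ℝ}
    (hx : x ∈ ball 0 r ×ˢ Ioo 0 h) : ‖x.1‖ ^ 2 + x.2 ^ 2 ≤ r ^ 2 + h ^ 2 := by
  obtain ⟨hx1, hx2, hx2h⟩ := hx
  rw [mem_ball_zero_iff] at hx1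
  nlinarith [norm_nonneg x.1]

end Geometry

theorem measureReal_ball_prod_Ioo {E : Type*} [NormedAddCommGroup E] [NormedSpace ℝ E]
    [FiniteDimensional ℝ E] [Nontrivial E] [MeasurableSpace E] [BorelSpace E]
    (μ : Measure E) [μ.IsAddHaarMeasure] {r h : ℝ} (hr : 0 ≤ r) (hh : 0 ≤ h) :
    (μ.prod volume).real (ball 0 r ×ˢ Ioo 0 h) = r ^ finrank ℝ E * μ.real (ball 0 1) * h := by
  rw [measureReal_def, Measure.prod_prod, Measure.addHaar_ball μ 0 hr, Real.volume_Ioo,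
    ENNReal.toReal_mul, ENNReal.toReal_mul, ENNReal.toReal_ofReal (by positivity), sub_zero,
    ENNReal.toReal_ofReal hh, measureReal_def]

theorem norm_cgo_integrand_le {E : Type*} [NormedAddCommGroup E] [InnerProductSpace ℝ E]
    {v : E} (hv : ‖v‖ = 1) (y : E) (c s : ℝ) {τ t : ℝ} (hτ : 0 ≤ τ) (ht : 0 ≤ t) :
    ‖(Complex.I * τ * ((inner ℝ v y : ℝ) : ℂ) - τ * (c : ℂ)) *
        Complex.exp (Complex.I * τ * (s : ℂ) - τ * (t : ℂ))‖ ≤ τ * √(‖y‖ ^ 2 + c ^ 2) := by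
  have hinner : |inner ℝ v y| ≤ ‖y‖ := by
    simpa [hv] using abs_real_inner_le_norm v y
  have hsymbol : ‖Complex.I * τ * ((inner ℝ v y : ℝ) : ℂ) - τ * (c : ℂ)‖
      = τ * √((inner ℝ v y) ^ 2 + c ^ 2) := by
    conv_rhs => rw [← Real.sqrt_sq hτ, ← Real.sqrt_mul (sq_nonneg τ)]
    rw [Complex.norm_def, Complex.normSq_apply]
    congr 1
    simp [Complex.mul_re, Complex.mul_im]
    ring
  have hexp : ‖Complex.exp (Complex.I * τ * (s : ℂ) - τ * (t : ℂ))‖ ≤ 1 := by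
    rw [Complex.norm_exp, Real.exp_le_one_iff]
    simpa [Complex.mul_re] using mul_nonneg hτ ht
  rw [norm_mul, hsymbol]
  calc τ * √((inner ℝ v y) ^ 2 + c ^ 2) * ‖Complex.exp _‖
      ≤ τ * √((inner ℝ v y) ^ 2 + c ^ 2) := mul_le_of_le_one_right (by positivity) hexp
    _ ≤ τ * √(‖y‖ ^ 2 + c ^ 2) := by
      gcongr τ * √(?_ + _)
      exact sq_le_sq' (abs_le.1 hinner).1 (abs_le.1 hinner).2

theorem sqrt_div_pow_pred_eq {h Km : ℝ} (hh : 0 ≤ h) (hKm : 0 ≤ Km) {n : ℕ} (hn : 1 ≤ n) :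
    √(h / Km) ^ (n - 1) = h ^ (((n : ℝ) - 1) / 2) * Km ^ (-(((n : ℝ) - 1) / 2)) := by
  rw [Real.sqrt_eq_rpow, ← Real.rpow_natCast, ← Real.rpow_mul (by positivity),
    Nat.cast_sub hn, Nat.cast_one, one_div_mul_eq_div, Real.div_rpow hh hKm,
    Real.rpow_neg hKm, div_eq_mul_inv]

theorem holder_bound_mul_cylinder_volume_eq {h Km : ℝ} (hh : 0 < h) (hKm : 0 < Km)
    {n : ℕ} (hn : 1 ≤ n) (α A τ V : ℝ) :
    τ * (A * √(√(h / Km) ^ 2 + h ^ 2) ^ α) * (√(h / Km) ^ (n - 1) * V * h)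
      = V * A * τ * (h + Km⁻¹) ^ (α / 2) * h ^ (((n : ℝ) + α + 1) / 2)
          * Km ^ (-(((n : ℝ) - 1) / 2)) := by
  have hsq : √(h / Km) ^ 2 + h ^ 2 = h * (h + Km⁻¹) := by
    rw [Real.sq_sqrt (by positivity)]
    field_simp
    ring
  have hholder : √(h * (h + Km⁻¹)) ^ α = h ^ (α / 2) * (h + Km⁻¹) ^ (α / 2) := by
    rw [Real.sqrt_eq_rpow, ← Real.rpow_mul (by positivity), one_div_mul_eq_div,
      Real.mul_rpow hh.le (by positivity)]
  have hexponent : h ^ (((n : ℝ) + α + 1) / 2) = h ^ (α / 2) * h ^ (((n : ℝ) - 1) / 2) * h := by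
    rw [show ((n : ℝ) + α + 1) / 2 = α / 2 + ((n : ℝ) - 1) / 2 + 1 by ring,
      Real.rpow_add hh, Real.rpow_add hh, Real.rpow_one]
  rw [hsq, hholder, sqrt_div_pow_pred_eq hh.le hKm.le hn, hexponent]
  ring

theorem cgo_I3_estimate_general (n : ℕ) (hn : 2 ≤ n) (α : ℝ) (hα0 : 0 < α) :
    ∃ C : ℝ, 0 < C ∧
      ∀ (Km K Kp h b A : ℝ), 0 < Km → Km ≤ K → K ≤ Kp → 0 < h → 0 < b →
        h / Km ≤ b ^ 2 → 0 ≤ A →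
        ∀ w : EuclideanSpace ℝ (Fin (n - 1)) → ℝ, Measurable w →
          (∀ x' : EuclideanSpace ℝ (Fin (n - 1)), ‖x'‖ < b →
            Km * ‖x'‖ ^ 2 ≤ w x' ∧ w x' ≤ Kp * ‖x'‖ ^ 2) →
        ∀ F : EuclideanSpace ℝ (Fin (n - 1)) × ℝ → EuclideanSpace ℝ (Fin (n - 1)) × ℝ,
          (∀ x ∈ closure {x : EuclideanSpace ℝ (Fin (n - 1)) × ℝ |
              ‖x.1‖ < b ∧ w x.1 < x.2 ∧ x.2 < h},
            Real.sqrt (‖(F x).1 - (F 0).1‖ ^ 2 + ((F x).2 - (F 0).2) ^ 2)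
              ≤ A * Real.sqrt (‖x.1‖ ^ 2 + x.2 ^ 2) ^ α) →
        ∀ τ : ℝ, 0 < τ →
        ∀ v : EuclideanSpace ℝ (Fin (n - 1)), ‖v‖ = 1 →
          ‖
            (∫ x in {x : EuclideanSpace ℝ (Fin (n - 1)) × ℝ | ‖x.1‖ < b ∧ w x.1 < x.2 ∧ x.2 < h},
              (Complex.I * (τ : ℂ) * ((inner ℝ v ((F x).1 - (F 0).1) : ℝ) : ℂ)
                  - (τ : ℂ) * (((F x).2 - (F 0).2 : ℝ) : ℂ))
                * Complex.exp (Complex.I * (τ : ℂ) * ((inner ℝ v x.1 : ℝ) : ℂ) - (τ : ℂ) * (x.2 : ℂ)))‖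
            ≤ C * A * τ * (h + Km⁻¹) ^ (α / 2) * h ^ (((n : ℝ) + α + 1) / 2)
                * Km ^ (-(((n : ℝ) - 1) / 2)) := by
  have : Nonempty (Fin (n - 1)) := ⟨⟨0, by omega⟩⟩
  set B₁ := ball (0 : EuclideanSpace ℝ (Fin (n - 1))) 1
  refine ⟨volume.real B₁, ENNReal.toReal_pos (measure_ball_pos _ _ one_pos).ne'
    measure_ball_lt_top.ne, ?_⟩
  intro Km K Kp h b A hKm _ _ hh _ _ hA w _ hw F hF τ hτ v hv
  set r := √(h / Km)
  have hcap : graphCap w b h ⊆ ball 0 r ×ˢ Ioo 0 h :=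
    graphCap_subset_ball_prod_Ioo hKm fun x' hx' => (hw x' hx').1
  have hcyl_finite : volume (ball (0 : EuclideanSpace ℝ (Fin (n - 1))) r ×ˢ Ioo 0 h) ≠ ⊤ :=
    ((isBounded_ball.prod (isBounded_Ioo 0 h)).measure_lt_top).ne
  have hpointwise : ∀ x ∈ graphCap w b h,
      ‖(Complex.I * (τ : ℂ) * ((inner ℝ v ((F x).1 - (F 0).1) : ℝ) : ℂ)
          - (τ : ℂ) * (((F x).2 - (F 0).2 : ℝ) : ℂ))
        * Complex.exp (Complex.I * (τ : ℂ) * ((inner ℝ v x.1 : ℝ) : ℂ) - (τ : ℂ) * (x.2 : ℂ))‖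
        ≤ τ * (A * √(r ^ 2 + h ^ 2) ^ α) := fun x hx =>
    (norm_cgo_integrand_le hv _ _ _ hτ.le (hcap hx).2.1.le).trans <| by
      gcongr
      refine (hF x (subset_closure hx)).trans ?_
      gcongr A * √?_ ^ α
      exact norm_sq_add_sq_le_of_mem_ball_prod_Ioo (hcap hx)
  calc _ ≤ τ * (A * √(r ^ 2 + h ^ 2) ^ α) * volume.real (graphCap w b h) :=
        norm_setIntegral_le_of_norm_le_const ((measure_mono hcap).trans_lt hcyl_finite.lt_top)
          hpointwise
    _ ≤ τ * (A * √(r ^ 2 + h ^ 2) ^ α) * (r ^ (n - 1) * volume.real B₁ * h) := by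
        gcongr
        refine (measureReal_mono hcap hcyl_finite).trans_eq ?_
        rw [Measure.volume_eq_prod, measureReal_ball_prod_Ioo _ (Real.sqrt_nonneg _) hh.le,
          finrank_euclideanSpace_fin]
    _ = _ := holder_bound_mul_cylinder_volume_eq hh hKm (by omega) α A τ _

/-- For `n ≥ 2` and `0 < α ≤ 1` there is `C_{n,α} > 0` such that:
with `D_{b,h}` as in Statement 5 and `F : ℝⁿ → ℝⁿ` satisfying the Hölder bound
`|F(x) − F(0)| ≤ A|x|^α` (Euclidean norms) on the closure of `D_{b,h}`, one has for
all `τ > 0`, unit `v̂'` and `ξ = iτ(v̂',0) − τe_n`: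
`|∫_{D_{b,h}} (ξ·(F(x) − F(0))) E_ξ(x) dx|
  ≤ C_{n,α} A τ (h + K_−^{−1})^{α/2} h^{(n+α+1)/2} K_−^{−(n−1)/2}`. -/
theorem cgo_I3_estimate (n : ℕ) (hn : 2 ≤ n) (α : ℝ) (hα0 : 0 < α) (hα1 : α ≤ 1) :
    ∃ C : ℝ, 0 < C ∧
      ∀ (Km K Kp h b A : ℝ), 0 < Km → Km ≤ K → K ≤ Kp → 0 < h → 0 < b →
        h / Km ≤ b ^ 2 → 0 ≤ A →
        ∀ w : EuclideanSpace ℝ (Fin (n - 1)) → ℝ, Measurable w →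
          (∀ x' : EuclideanSpace ℝ (Fin (n - 1)), ‖x'‖ < b →
            Km * ‖x'‖ ^ 2 ≤ w x' ∧ w x' ≤ Kp * ‖x'‖ ^ 2) →
        ∀ F : EuclideanSpace ℝ (Fin (n - 1)) × ℝ → EuclideanSpace ℝ (Fin (n - 1)) × ℝ,
          (∀ x ∈ closure {x : EuclideanSpace ℝ (Fin (n - 1)) × ℝ |
              ‖x.1‖ < b ∧ w x.1 < x.2 ∧ x.2 < h},
            Real.sqrt (‖(F x).1 - (F 0).1‖ ^ 2 + ((F x).2 - (F 0).2) ^ 2)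
              ≤ A * Real.sqrt (‖x.1‖ ^ 2 + x.2 ^ 2) ^ α) →
        ∀ τ : ℝ, 0 < τ →
        ∀ v : EuclideanSpace ℝ (Fin (n - 1)), ‖v‖ = 1 →
          ‖
            (∫ x in {x : EuclideanSpace ℝ (Fin (n - 1)) × ℝ | ‖x.1‖ < b ∧ w x.1 < x.2 ∧ x.2 < h},
              (Complex.I * (τ : ℂ) * ((inner ℝ v ((F x).1 - (F 0).1) : ℝ) : ℂ)
                  - (τ : ℂ) * (((F x).2 - (F 0).2 : ℝ) : ℂ))
                * Complex.exp (Complex.I * (τ : ℂ) * ((inner ℝ v x.1 : ℝ) : ℂ) - (τ : ℂ) * (x.2 : ℂ)))‖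
            ≤ C * A * τ * (h + Km⁻¹) ^ (α / 2) * h ^ (((n : ℝ) + α + 1) / 2)
                * Km ^ (-(((n : ℝ) - 1) / 2)) :=
  cgo_I3_estimate_general n hn α hα0
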